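/- (Proposition 5.7 for ℤA_{n+1} modulo ⟨τ^k⟩) Fix n ≥ 1 and k ≥ 1. A subset C ⊆ ZMod k × {0,…,n} is a configuration of the quotient translation quiver Q_k = ℤA_{n+1}/⟨τ^k⟩ if and only if π^{−1}(C) is a configuration of ℤA_{n+1}. Consequently π induces a bijection between the configurations C of ℤA_{n+1} satisfying τ^k(C) = C and the configurations of Q_k. -/

import Mathlib

/-- Sum over the arrows `y → v` of `ℤA_{n+1}` of the value `f v`. The vertex set of
`ℤA_{n+1}` is `ℤ × {0,…,n}`, with arrows `(q,s) → (q,s+1)` for `s < n` and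
`(q,s) → (q+1,s-1)` for `0 < s`. -/
def stepA (n : ℕ) (f : ℤ × ℕ → ℕ) (y : ℤ × ℕ) : ℤ :=
  (if y.2 < n then (f (y.1, y.2 + 1) : ℤ) else 0) +
    (if 0 < y.2 then (f (y.1 + 1, y.2 - 1) : ℤ) else 0)

/-- `hA n x k y` is `h_k(y,x)` for `ℤA_{n+1}`: `h_0(y,x) = δ(y,x)` and, for `k > 0`,
`h_k(y,x) = max(h'_k(y,x), 0)` where
`h'_k(y,x) = ∑_{y → v} h_{k-1}(v,x) - h_{k-2}(τ⁻¹ y, x)` and `τ⁻¹(q,s) = (q+1,s)`. -/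
def hA (n : ℕ) (x : ℤ × ℕ) : ℕ → ℤ × ℕ → ℕ
  | 0 => fun y => if y = x then 1 else 0
  | 1 => fun y => (stepA n (hA n x 0) y).toNat
  | k + 2 => fun y =>
      (stepA n (hA n x (k + 1)) y - (hA n x k (y.1 + 1, y.2) : ℤ)).toNat

/-- `h'A n x k y` is `h'_k(y,x)` (meaningful for `k ≥ 1`):
`h'_k(y,x) = ∑_{y → v} h_{k-1}(v,x) - h_{k-2}(τ⁻¹ y, x) ∈ ℤ`. -/
def h'A (n : ℕ) (x : ℤ × ℕ) (k : ℕ) (y : ℤ × ℕ) : ℤ :=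
  stepA n (hA n x (k - 1)) y -
    (if 2 ≤ k then (hA n x (k - 2) (y.1 + 1, y.2) : ℤ) else 0)

/-- `hTotA n y x = h(y,x) = ∑_{k ≥ 0} h_k(y,x)` (a finite sum, via `finsum`). -/
noncomputable def hTotA (n : ℕ) (y x : ℤ × ℕ) : ℕ := ∑ᶠ k : ℕ, hA n x k y

/-- `ω` for `ℤA_{n+1}`: `ω(p,r) = (p+r-n, n-r)`. -/
def ωA (n : ℕ) (v : ℤ × ℕ) : ℤ × ℕ := (v.1 + v.2 - n, n - v.2)

/-- A configuration of `ℤA_{n+1}`: a set `C` of vertices of `ℤA_{n+1}` such that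
(C1) every vertex `y` satisfies `h(y,c) > 0` for some `c ∈ C`, and
(C2) `ω C = C` and for `c, d ∈ C`, `h(d,c)` is `2` if `d = c = ω c`, `1` if
`d = c ≠ ω c` or `d = ω c ≠ c`, and `0` otherwise. -/
def IsConfigA (n : ℕ) (C : Set (ℤ × ℕ)) : Prop :=
  (∀ v ∈ C, v.2 ≤ n) ∧
    (∀ y : ℤ × ℕ, y.2 ≤ n → ∃ c ∈ C, 0 < hTotA n y c) ∧
    ωA n '' C = C ∧
    ∀ c ∈ C, ∀ d ∈ C,
      hTotA n d c =
        if d = c ∧ c = ωA n c then 2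
        else if d = c ∨ d = ωA n c then 1
        else 0

/-- Sum over the arrows `y → v` of the quotient quiver `ℤA_{n+1}/⟨τ^k⟩`
(vertex set `ZMod k × {0,…,n}`) of the value `f v`. -/
def stepQ (n k : ℕ) (f : ZMod k × ℕ → ℕ) (y : ZMod k × ℕ) : ℤ :=
  (if y.2 < n then (f (y.1, y.2 + 1) : ℤ) else 0) +
    (if 0 < y.2 then (f (y.1 + 1, y.2 - 1) : ℤ) else 0)

/-- `hQ n k x m y` is `ĥ_m(y,x)` on `ℤA_{n+1}/⟨τ^k⟩`, defined by the same recursion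
as `h_m` on `ℤA_{n+1}`, with `τ⁻¹(q,s) = (q+1,s)`. -/
def hQ (n k : ℕ) (x : ZMod k × ℕ) : ℕ → ZMod k × ℕ → ℕ
  | 0 => fun y => if y = x then 1 else 0
  | 1 => fun y => (stepQ n k (hQ n k x 0) y).toNat
  | m + 2 => fun y =>
      (stepQ n k (hQ n k x (m + 1)) y - (hQ n k x m (y.1 + 1, y.2) : ℤ)).toNat

/-- `hTotQ n k y x = ĥ(y,x) = ∑_{m ≥ 0} ĥ_m(y,x)` (a finite sum, via `finsum`). -/
noncomputable def hTotQ (n k : ℕ) (y x : ZMod k × ℕ) : ℕ := ∑ᶠ m : ℕ, hQ n k x m y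

/-- `ω` on the quotient quiver `ℤA_{n+1}/⟨τ^k⟩`: `ω(p,r) = (p+r-n, n-r)` with the
first coordinate computed in `ZMod k`. -/
def ωQ (n k : ℕ) (v : ZMod k × ℕ) : ZMod k × ℕ :=
  (v.1 + (v.2 : ZMod k) - (n : ZMod k), n - v.2)

/-- A configuration of the quotient translation quiver `ℤA_{n+1}/⟨τ^k⟩`. -/
def IsConfigQ (n k : ℕ) (C : Set (ZMod k × ℕ)) : Prop :=
  (∀ v ∈ C, v.2 ≤ n) ∧
    (∀ y : ZMod k × ℕ, y.2 ≤ n → ∃ c ∈ C, 0 < hTotQ n k y c) ∧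
    ωQ n k '' C = C ∧
    ∀ c ∈ C, ∀ d ∈ C,
      hTotQ n k d c =
        if d = c ∧ c = ωQ n k c then 2
        else if d = c ∨ d = ωQ n k c then 1
        else 0

/-!
On `ℤA_{n+1}` the height functions have a closed form: `h((p, r), (q, s))` is `1` when
`Δ = q - p` lies in the window `[r - s, min r (n - s)]` (and then `h_m` is nonzero only for the
path length `m = 2Δ + s - r`), and `0` otherwise. The recursion only ever adds to the first
coordinate, so the same computation over `ZMod k` gives `ĥ((a, r), (c, s)) = #{Δ in the window |
a + Δ = c}`, i.e. `ĥ(ȳ, π x)` is the number of lifts `y` of `ȳ` with `h(y, x) ≠ 0`.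

Since `h(c, c) = h(ω c, c) = 1`, `h ≤ 1` and `ω` has no fixed points on `ℤA_{n+1}` (`n ≥ 1`), the
value prescribed by (C2) for `ĥ(ȳ, π c)` is the number of lifts of `ȳ` among `c, ω c`; so (C2)
for `C` says that `c` and `ω c` are the only `y ∈ π⁻¹ C` with `h(y, c) ≠ 0`, which is (C2) for
`π⁻¹ C`. Finally the `τ^k`-stable subsets of `ℤA_{n+1}` are exactly the preimages under `π`.
-/

open Finset

/-- A path of length `m` from row `r` to row `s` using `Δ` arrows `(q, t) → (q + 1, t - 1)`; the
inequalities cut out the rectangle on which `h(-, x)` is nonzero. -/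
def HammockIndex (n s m r Δ : ℕ) : Prop :=
  m + r = 2 * Δ + s ∧ Δ ≤ r ∧ r ≤ Δ + s ∧ Δ + s ≤ n

section Mesh

variable {R : Type*} [AddCommMonoidWithOne R]

def InHammock (n s m r : ℕ) (a c : R) : Prop :=
  ∃ Δ : ℕ, HammockIndex n s m r Δ ∧ a + Δ = c

lemma inHammock_iff_of_index {n s m r e D : ℕ} {a a' c : R} (ha : a' = a + e)
    (hD : ∀ Δ, HammockIndex n s m r Δ → Δ + e = D) :
    InHammock n s m r a' c ↔ (e ≤ D ∧ HammockIndex n s m r (D - e)) ∧ a + D = c := by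
  subst ha
  constructor
  · rintro ⟨Δ, hΔ, rfl⟩
    obtain rfl := hD Δ hΔ
    refine ⟨⟨by omega, by simpa using hΔ⟩, ?_⟩
    push_cast
    ac_rfl
  · rintro ⟨⟨he, hΔ⟩, rfl⟩
    refine ⟨D - e, hΔ, ?_⟩
    rw [add_assoc, ← Nat.cast_add, Nat.add_sub_cancel' he]

/-- A path of length `m` from row `r` to row `s` forces `Δ = (m + r - s) / 2`. -/
lemma inHammock_iff_of_add_eq {n s m r L : ℕ} {a c : R} (h : m + r = L) :
    InHammock n s m r a c ↔ HammockIndex n s m r ((L - s) / 2) ∧ a + ((L - s) / 2 : ℕ) = c := by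
  simpa using inHammock_iff_of_index (e := 0) (D := (L - s) / 2) (a := a) (by simp)
    fun Δ hΔ => by unfold HammockIndex at hΔ; omega

lemma inHammock_add_one_iff_of_add_eq {n s m r L : ℕ} {a c : R} (h : m + r + 2 = L) :
    InHammock n s m r (a + 1) c ↔
      (1 ≤ (L - s) / 2 ∧ HammockIndex n s m r ((L - s) / 2 - 1)) ∧ a + ((L - s) / 2 : ℕ) = c :=
  inHammock_iff_of_index (by simp) fun Δ hΔ => by unfold HammockIndex at hΔ; omega

variable [DecidableEq R]

/-- The recursion shared by `hA` (`R = ℤ`) and `hQ` (`R = ZMod k`). -/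
def stepR (n : ℕ) (f : R × ℕ → ℕ) (y : R × ℕ) : ℤ :=
  (if y.2 < n then (f (y.1, y.2 + 1) : ℤ) else 0) +
    (if 0 < y.2 then (f (y.1 + 1, y.2 - 1) : ℤ) else 0)

def hR (n : ℕ) (x : R × ℕ) : ℕ → R × ℕ → ℕ
  | 0 => fun y => if y = x then 1 else 0
  | 1 => fun y => (stepR n (hR n x 0) y).toNat
  | m + 2 => fun y =>
      (stepR n (hR n x (m + 1)) y - (hR n x m (y.1 + 1, y.2) : ℤ)).toNat

lemma hA_eq_hR (n : ℕ) (x : ℤ × ℕ) (m : ℕ) : hA n x m = hR n x m := by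
  induction m using Nat.twoStepInduction with
  | zero => rfl
  | one => rfl
  | more m ih ih' => funext y; simp only [hA, hR, stepA, stepR, ih, ih']

lemma hQ_eq_hR (n k : ℕ) (x : ZMod k × ℕ) (m : ℕ) : hQ n k x m = hR n x m := by
  induction m using Nat.twoStepInduction with
  | zero => rfl
  | one => rfl
  | more m ih ih' => funext y; simp only [hQ, hR, stepQ, stepR, ih, ih']

variable {n s : ℕ} {c : R}

open scoped Classical

lemma hR_zero (hs : s ≤ n) (a : R) (r : ℕ) :
    hR n (c, s) 0 (a, r) = if InHammock n s 0 r a c then 1 else 0 := by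
  have key : InHammock n s 0 r a c ↔ (0 ≤ 0 ∧ HammockIndex n s 0 r (0 - 0)) ∧ a + (0 : ℕ) = c :=
    inHammock_iff_of_index (by simp) fun Δ h => by unfold HammockIndex at h; omega
  simp only [hR, key, HammockIndex, Prod.ext_iff, Nat.cast_zero, add_zero]
  congr 1
  ext
  constructor
  · rintro ⟨rfl, rfl⟩; exact ⟨by omega, rfl⟩
  · rintro ⟨⟨-, h⟩, rfl⟩; exact ⟨rfl, by omega⟩

lemma hR_one (hs : s ≤ n) (a : R) {r : ℕ} (hr : r ≤ n) :
    hR n (c, s) 1 (a, r) = if InHammock n s 1 r a c then 1 else 0 := by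
  show (stepR n (hR n (c, s) 0) (a, r)).toNat = _
  simp +contextual (disch := omega) only [stepR, hR_zero hs,
    inHammock_iff_of_add_eq (L := 1 + r), inHammock_add_one_iff_of_add_eq (L := 1 + r)]
  by_cases hc : a + ((1 + r - s) / 2 : ℕ) = c
  · simp only [hc, and_true, HammockIndex]
    split_ifs <;> omega
  · simp [hc]

lemma hR_add_two (hs : s ≤ n) {m : ℕ}
    (ih : ∀ (a : R) r, r ≤ n → hR n (c, s) m (a, r) = if InHammock n s m r a c then 1 else 0)
    (ih' : ∀ (a : R) r, r ≤ n →
      hR n (c, s) (m + 1) (a, r) = if InHammock n s (m + 1) r a c then 1 else 0)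
    (a : R) {r : ℕ} (hr : r ≤ n) :
    hR n (c, s) (m + 2) (a, r) = if InHammock n s (m + 2) r a c then 1 else 0 := by
  show (stepR n (hR n (c, s) (m + 1)) (a, r) - (hR n (c, s) m (a + 1, r) : ℤ)).toNat = _
  simp +contextual (disch := omega) only [stepR, ih, ih',
    inHammock_iff_of_add_eq (L := m + 2 + r), inHammock_add_one_iff_of_add_eq (L := m + 2 + r)]
  by_cases hc : a + ((m + 2 + r - s) / 2 : ℕ) = c
  · simp only [hc, and_true, HammockIndex]
    split_ifs <;> omega
  · simp [hc]

lemma hR_eq_ite (hs : s ≤ n) (m : ℕ) (a : R) {r : ℕ} (hr : r ≤ n) :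
    hR n (c, s) m (a, r) = if InHammock n s m r a c then 1 else 0 := by
  induction m using Nat.twoStepInduction generalizing a r with
  | zero => exact hR_zero hs a r
  | one => exact hR_one hs a hr
  | more m ih ih' => exact hR_add_two hs (fun a _ hr => ih a hr) (fun a _ hr => ih' a hr) a hr

end Mesh

def offsets (n r s : ℕ) : Finset ℕ := Icc (r - s) (min r (n - s))

lemma hammockIndex_iff {n s m r Δ : ℕ} (hs : s ≤ n) :
    HammockIndex n s m r Δ ↔ Δ ∈ offsets n r s ∧ 2 * Δ + s - r = m := by
  simp only [HammockIndex, offsets, mem_Icc]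
  omega

lemma finsum_hR_eq_card {R : Type*} [AddCommMonoidWithOne R] [DecidableEq R] {n r s : ℕ}
    (hr : r ≤ n) (hs : s ≤ n) (a c : R) :
    ∑ᶠ m, hR n (c, s) m (a, r) = #{Δ ∈ offsets n r s | a + ((Δ : ℕ) : R) = c} := by
  set F := {Δ ∈ offsets n r s | a + ((Δ : ℕ) : R) = c}
  have hinj : Set.InjOn (fun Δ => 2 * Δ + s - r) (offsets n r s) := by
    intro Δ hΔ Δ' hΔ' h
    simp only [offsets, coe_Icc, Set.mem_Icc] at hΔ hΔ' h
    omega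
  have hmem : ∀ m, InHammock n s m r a c ↔ m ∈ F.image fun Δ => 2 * Δ + s - r := by
    intro m
    simp only [InHammock, hammockIndex_iff hs, F, mem_image, mem_filter]
    tauto
  simp_rw [hR_eq_ite hs _ a hr, hmem]
  rw [finsum_eq_sum_of_support_subset _ (s := F.image fun Δ => 2 * Δ + s - r) (by simp),
    sum_boole, filter_mem_eq_inter, inter_self, Nat.cast_id,
    card_image_of_injOn (hinj.mono (coe_subset.2 (filter_subset _ _)))]

section Heights

variable {n : ℕ}

lemma hTotA_eq_card {p q : ℤ} {r s : ℕ} (hr : r ≤ n) (hs : s ≤ n) :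
    hTotA n (p, r) (q, s) = #{Δ ∈ offsets n r s | p + ((Δ : ℕ) : ℤ) = q} := by
  simp only [hTotA, hA_eq_hR]
  exact finsum_hR_eq_card hr hs p q

lemma hTotQ_eq_card {k : ℕ} {a c : ZMod k} {r s : ℕ} (hr : r ≤ n) (hs : s ≤ n) :
    hTotQ n k (a, r) (c, s) = #{Δ ∈ offsets n r s | a + ((Δ : ℕ) : ZMod k) = c} := by
  simp only [hTotQ, hQ_eq_hR]
  exact finsum_hR_eq_card hr hs a c

lemma hTotA_pos_iff {p q : ℤ} {r s : ℕ} (hr : r ≤ n) (hs : s ≤ n) :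
    0 < hTotA n (p, r) (q, s) ↔ ∃ Δ ∈ offsets n r s, p + (Δ : ℤ) = q := by
  rw [hTotA_eq_card hr hs, card_pos, filter_nonempty_iff]

lemma hTotQ_pos_iff {k : ℕ} {a c : ZMod k} {r s : ℕ} (hr : r ≤ n) (hs : s ≤ n) :
    0 < hTotQ n k (a, r) (c, s) ↔ ∃ Δ ∈ offsets n r s, a + (Δ : ZMod k) = c := by
  rw [hTotQ_eq_card hr hs, card_pos, filter_nonempty_iff]

lemma hTotA_le_one {p q : ℤ} {r s : ℕ} (hr : r ≤ n) (hs : s ≤ n) :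
    hTotA n (p, r) (q, s) ≤ 1 := by
  rw [hTotA_eq_card hr hs, card_le_one]
  intro Δ hΔ Δ' hΔ'
  simp only [mem_filter] at hΔ hΔ'
  omega

lemma hTotA_self_pos {v : ℤ × ℕ} (hv : v.2 ≤ n) : 0 < hTotA n v v := by
  obtain ⟨p, r⟩ := v
  rw [hTotA_pos_iff hv hv]
  exact ⟨0, by simp [offsets], by simp⟩

lemma hTotA_ωA_pos {v : ℤ × ℕ} (hv : v.2 ≤ n) : 0 < hTotA n (ωA n v) v := by
  obtain ⟨q, s⟩ := v
  rw [ωA, hTotA_pos_iff (Nat.sub_le n s) hv]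
  exact ⟨n - s, by simp [offsets], by simp only at hv; omega⟩

end Heights

section Projection

variable {n k : ℕ}

def proj (k : ℕ) (v : ℤ × ℕ) : ZMod k × ℕ := ((v.1 : ZMod k), v.2)

@[simp] lemma proj_mk (p : ℤ) (r : ℕ) : proj k (p, r) = ((p : ZMod k), r) := rfl

lemma proj_surjective (k : ℕ) : Function.Surjective (proj k) := by
  rintro ⟨a, r⟩
  obtain ⟨p, rfl⟩ := ZMod.intCast_surjective a
  exact ⟨(p, r), rfl⟩

lemma proj_ωA (v : ℤ × ℕ) : proj k (ωA n v) = ωQ n k (proj k v) := by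
  simp [proj, ωA, ωQ]

lemma ωA_ne_self (hn : 1 ≤ n) (v : ℤ × ℕ) : ωA n v ≠ v := by
  simp only [ωA, ne_eq, Prod.ext_iff]
  omega

lemma ωA_mk_add_sub {v : ℤ × ℕ} (hv : v.2 ≤ n) : ωA n (v.1 + v.2, n - v.2) = v := by
  simp only [ωA, Prod.ext_iff]
  omega

lemma ωQ_injOn : Set.InjOn (ωQ n k) {v | v.2 ≤ n} := by
  rintro ⟨a, r⟩ hr ⟨b, s⟩ hs h
  simp only [ωQ, Prod.mk.injEq, Set.mem_ofPred_eq] at h hr hs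
  obtain rfl : r = s := by omega
  simpa using h.1

lemma image_ωA_preimage_proj {C : Set (ZMod k × ℕ)} (hC : ∀ v ∈ C, v.2 ≤ n) :
    ωA n '' (proj k ⁻¹' C) = proj k ⁻¹' (ωQ n k '' C) := by
  ext x
  constructor
  · rintro ⟨w, hw, rfl⟩
    exact ⟨proj k w, hw, (proj_ωA w).symm⟩
  · rintro ⟨c, hc, hx⟩
    have hx2 : x.2 ≤ n := (congrArg Prod.snd hx).symm ▸ Nat.sub_le n c.2
    refine ⟨(x.1 + x.2, n - x.2), ?_, ωA_mk_add_sub hx2⟩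
    have : ωQ n k (proj k (x.1 + x.2, n - x.2)) = ωQ n k c := by
      rw [← proj_ωA, ωA_mk_add_sub hx2, hx]
    rwa [Set.mem_preimage, ωQ_injOn (Nat.sub_le n x.2) (hC c hc) this]

end Projection

lemma configWeight_eq {α : Type*} [DecidableEq α] (ω : α → α) (d c : α) :
    (if d = c ∧ c = ω c then 2 else if d = c ∨ d = ω c then 1 else 0 : ℕ) =
      (if d = c then 1 else 0) + (if d = ω c then 1 else 0) := by
  by_cases h₁ : d = c <;> by_cases h₂ : d = ω c <;> simp_all

section Covering

variable {n k : ℕ}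

lemma setOf_proj_eq_hTotA_pos {a : ZMod k} {q : ℤ} {r s : ℕ} (hr : r ≤ n) (hs : s ≤ n) :
    {y | proj k y = (a, r) ∧ 0 < hTotA n y (q, s)} =
      ↑({Δ ∈ offsets n r s | a + ((Δ : ℕ) : ZMod k) = q}.image fun Δ : ℕ => (q - Δ, r)) := by
  ext ⟨p, r'⟩
  simp only [Set.mem_ofPred_eq, proj_mk, Prod.mk.injEq, coe_image, coe_filter, Set.mem_image]
  constructor
  · rintro ⟨⟨rfl, rfl⟩, hpos⟩
    obtain ⟨Δ, hΔ, rfl⟩ := (hTotA_pos_iff hr hs).1 hpos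
    exact ⟨Δ, ⟨hΔ, by push_cast; ring⟩, by ring, rfl⟩
  · rintro ⟨Δ, ⟨hΔ, ha⟩, rfl, rfl⟩
    exact ⟨⟨by push_cast; rw [← ha]; ring, rfl⟩, (hTotA_pos_iff hr hs).2 ⟨Δ, hΔ, by ring⟩⟩

lemma hTotQ_eq_ncard {a : ZMod k} {q : ℤ} {r s : ℕ} (hr : r ≤ n) (hs : s ≤ n) :
    hTotQ n k (a, r) (proj k (q, s)) = {y | proj k y = (a, r) ∧ 0 < hTotA n y (q, s)}.ncard := by
  rw [setOf_proj_eq_hTotA_pos hr hs, Set.ncard_coe_finset,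
    card_image_of_injective _ fun Δ Δ' h => by simpa using h, proj_mk, hTotQ_eq_card hr hs]

lemma hTotA_eq_configWeight_iff (hn : 1 ≤ n) {d c : ℤ × ℕ} (hd : d.2 ≤ n) (hc : c.2 ≤ n) :
    hTotA n d c = (if d = c ∧ c = ωA n c then 2 else if d = c ∨ d = ωA n c then 1 else 0) ↔
      (0 < hTotA n d c → d = c ∨ d = ωA n c) := by
  have hle : hTotA n d c ≤ 1 := hTotA_le_one hd hc
  rw [if_neg fun h => ωA_ne_self hn c h.2.symm]
  split_ifs with h
  · have : 0 < hTotA n d c := by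
      rcases h with rfl | rfl
      exacts [hTotA_self_pos hc, hTotA_ωA_pos hc]
    exact ⟨fun _ _ => h, fun _ => by omega⟩
  · exact ⟨fun h0 hpos => by omega, fun himp => by by_contra h0; exact h (himp (by omega))⟩

lemma hTotQ_proj_eq_configWeight_iff (hn : 1 ≤ n) {d : ZMod k × ℕ} {c : ℤ × ℕ} (hd : d.2 ≤ n)
    (hc : c.2 ≤ n) :
    hTotQ n k d (proj k c) =
        (if d = proj k c ∧ proj k c = ωQ n k (proj k c) then 2
        else if d = proj k c ∨ d = ωQ n k (proj k c) then 1 else 0) ↔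
      ∀ y, proj k y = d → 0 < hTotA n y c → y = c ∨ y = ωA n c := by
  obtain ⟨a, r⟩ := d
  obtain ⟨q, s⟩ := c
  set T : Finset (ℤ × ℕ) := {y ∈ {(q, s), ωA n (q, s)} | proj k y = (a, r)}
  have hTS : ↑T ⊆ {y | proj k y = (a, r) ∧ 0 < hTotA n y (q, s)} := by
    intro y hy
    simp only [T, coe_filter, mem_insert, mem_singleton, Set.mem_ofPred_eq] at hy
    obtain ⟨rfl | rfl, hy⟩ := hy
    exacts [⟨hy, hTotA_self_pos hc⟩, ⟨hy, hTotA_ωA_pos hc⟩]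
  have hT : #T = (if (a, r) = proj k (q, s) then 1 else 0) +
      (if (a, r) = ωQ n k (proj k (q, s)) then 1 else 0) := by
    rw [card_filter, sum_pair (ωA_ne_self hn _).symm, proj_ωA]
    simp only [eq_comm]
  rw [configWeight_eq, ← hT, hTotQ_eq_ncard hd hc, ← Set.ncard_coe_finset]
  constructor
  · intro h y hy hpos
    have hST := Set.eq_of_subset_of_ncard_le hTS h.le
      ((setOf_proj_eq_hTotA_pos hd hc).symm ▸ finite_toSet _)
    have hyT : y ∈ (T : Set (ℤ × ℕ)) := hST ▸ ⟨hy, hpos⟩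
    simp only [T, coe_filter, mem_insert, mem_singleton, Set.mem_ofPred_eq] at hyT
    exact hyT.1
  · intro h
    congr 1
    refine Set.Subset.antisymm (fun y ⟨hy, hpos⟩ => ?_) hTS
    simpa [T, hy] using h y hy hpos

end Covering

section Configurations

variable {n k : ℕ} {C : Set (ZMod k × ℕ)}

lemma covers_iff_preimage_proj (hC : ∀ v ∈ C, v.2 ≤ n) :
    (∀ y : ZMod k × ℕ, y.2 ≤ n → ∃ c ∈ C, 0 < hTotQ n k y c) ↔
      ∀ y : ℤ × ℕ, y.2 ≤ n → ∃ c ∈ proj k ⁻¹' C, 0 < hTotA n y c := by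
  rw [(proj_surjective k).forall]
  refine forall₂_congr fun ⟨p, r⟩ hr => ⟨?_, ?_⟩
  · rintro ⟨⟨a, s⟩, hc, hpos⟩
    obtain ⟨Δ, hΔ, rfl⟩ := (hTotQ_pos_iff hr (hC _ hc)).1 hpos
    exact ⟨(p + Δ, s), by simpa using hc, (hTotA_pos_iff hr (hC _ hc)).2 ⟨Δ, hΔ, rfl⟩⟩
  · rintro ⟨⟨q, s⟩, hc, hpos⟩
    obtain ⟨Δ, hΔ, rfl⟩ := (hTotA_pos_iff hr (hC _ hc)).1 hpos
    exact ⟨_, hc, (hTotQ_pos_iff hr (hC _ hc)).2 ⟨Δ, hΔ, by simp⟩⟩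

lemma image_ωQ_eq_iff_preimage_proj (hC : ∀ v ∈ C, v.2 ≤ n) :
    ωQ n k '' C = C ↔ ωA n '' (proj k ⁻¹' C) = proj k ⁻¹' C := by
  rw [image_ωA_preimage_proj hC, (proj_surjective k).preimage_injective.eq_iff]

lemma configWeights_iff_preimage_proj (hn : 1 ≤ n) (hC : ∀ v ∈ C, v.2 ≤ n) :
    (∀ c ∈ C, ∀ d ∈ C, hTotQ n k d c =
      if d = c ∧ c = ωQ n k c then 2 else if d = c ∨ d = ωQ n k c then 1 else 0) ↔
    ∀ c ∈ proj k ⁻¹' C, ∀ d ∈ proj k ⁻¹' C, hTotA n d c =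
      if d = c ∧ c = ωA n c then 2 else if d = c ∨ d = ωA n c then 1 else 0 := by
  rw [(proj_surjective k).forall]
  refine forall₂_congr fun c hc => ?_
  rw [forall₂_congr fun d hd => hTotQ_proj_eq_configWeight_iff hn (hC d hd) (hC _ hc),
    forall₂_congr fun (d : ℤ × ℕ) (hd : d ∈ proj k ⁻¹' C) =>
      hTotA_eq_configWeight_iff hn (hC _ hd) (hC _ hc)]
  exact ⟨fun h d hd => h _ hd d rfl, by rintro h _ hd y rfl; exact h y hd⟩

theorem isConfigQ_iff_isConfigA_preimage_proj (hn : 1 ≤ n) (C : Set (ZMod k × ℕ)) :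
    IsConfigQ n k C ↔ IsConfigA n (proj k ⁻¹' C) := by
  have hrow : (∀ v ∈ C, v.2 ≤ n) ↔ ∀ v ∈ proj k ⁻¹' C, v.2 ≤ n := (proj_surjective k).forall
  unfold IsConfigQ IsConfigA
  rw [← hrow]
  refine and_congr_right fun hC => ?_
  rw [covers_iff_preimage_proj hC, image_ωQ_eq_iff_preimage_proj hC,
    configWeights_iff_preimage_proj hn hC]

end Configurations

section Periodic

variable {k : ℕ}

lemma shift_image_preimage_proj (C : Set (ZMod k × ℕ)) :
    (fun v : ℤ × ℕ => (v.1 - (k : ℤ), v.2)) '' (proj k ⁻¹' C) = proj k ⁻¹' C := by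
  ext ⟨p, r⟩
  constructor
  · rintro ⟨⟨q, s⟩, hq, h⟩
    simp only [Prod.mk.injEq] at h
    obtain ⟨rfl, rfl⟩ := h
    simpa using hq
  · intro h
    exact ⟨(p + k, r), by simpa using h, by simp⟩

lemma add_mul_mem_of_shift_image_eq {D : Set (ℤ × ℕ)}
    (hD : (fun v : ℤ × ℕ => (v.1 - (k : ℤ), v.2)) '' D = D) {v : ℤ × ℕ} (hv : v ∈ D) (j : ℤ) :
    (v.1 + j * k, v.2) ∈ D := by
  have down : ∀ w ∈ D, (w.1 - k, w.2) ∈ D := fun w hw => hD ▸ Set.mem_image_of_mem _ hw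
  have up : ∀ w ∈ D, (w.1 + k, w.2) ∈ D := by
    intro w hw
    rw [← hD] at hw
    obtain ⟨u, hu, rfl⟩ := hw
    simpa using hu
  induction j using Int.induction_on with
  | zero => simpa using hv
  | succ j ih => simpa [add_mul, add_assoc] using up _ ih
  | pred j ih => simpa [sub_mul, add_sub_assoc] using down _ ih

lemma preimage_image_proj_of_shift_image_eq {D : Set (ℤ × ℕ)}
    (hD : (fun v : ℤ × ℕ => (v.1 - (k : ℤ), v.2)) '' D = D) : proj k ⁻¹' (proj k '' D) = D := by
  refine (Set.subset_preimage_image _ _).antisymm' ?_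
  rintro ⟨p, r⟩ ⟨⟨q, s⟩, hq, h⟩
  simp only [proj_mk, Prod.mk.injEq, ZMod.intCast_eq_intCast_iff_dvd_sub] at h
  obtain ⟨⟨j, hj⟩, rfl⟩ := h
  convert add_mul_mem_of_shift_image_eq hD hq j using 2
  simp only
  linarith

end Periodic

theorem config_quotient_ZA_general (n k : ℕ) (hn : 1 ≤ n) :
    (∀ C : Set (ZMod k × ℕ),
      IsConfigQ n k C ↔
        IsConfigA n ((fun v : ℤ × ℕ => (((v.1 : ℤ) : ZMod k), v.2)) ⁻¹' C)) ∧
      Set.BijOn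
        (fun C : Set (ZMod k × ℕ) =>
          (fun v : ℤ × ℕ => (((v.1 : ℤ) : ZMod k), v.2)) ⁻¹' C)
        {C : Set (ZMod k × ℕ) | IsConfigQ n k C}
        {D : Set (ℤ × ℕ) | IsConfigA n D ∧
          (fun v : ℤ × ℕ => (v.1 - (k : ℤ), v.2)) '' D = D} := by
  have hiff := isConfigQ_iff_isConfigA_preimage_proj (k := k) hn
  refine ⟨hiff, fun C hC => ⟨(hiff C).1 hC, shift_image_preimage_proj C⟩,
    (proj_surjective k).preimage_injective.injOn, ?_⟩
  rintro D ⟨hD, hshift⟩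
  have hsat := preimage_image_proj_of_shift_image_eq hshift
  exact ⟨proj k '' D, (hiff _).2 (by rwa [hsat]), hsat⟩

/-- Proposition 5.7 for `ℤA_{n+1}` modulo `⟨τ^k⟩`: with `π(q,s) = ((q : ZMod k), s)`,
a subset `C` of the vertices of the quotient quiver is a configuration iff
`π⁻¹ C` is a configuration of `ℤA_{n+1}`; consequently `C ↦ π⁻¹ C` is a bijection
from the configurations of the quotient quiver onto the configurations `D` of
`ℤA_{n+1}` satisfying `τ^k D = D`. -/
theorem config_quotient_ZA (n k : ℕ) (hn : 1 ≤ n) (hk : 1 ≤ k) :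
    (∀ C : Set (ZMod k × ℕ),
      IsConfigQ n k C ↔
        IsConfigA n ((fun v : ℤ × ℕ => (((v.1 : ℤ) : ZMod k), v.2)) ⁻¹' C)) ∧
      Set.BijOn
        (fun C : Set (ZMod k × ℕ) =>
          (fun v : ℤ × ℕ => (((v.1 : ℤ) : ZMod k), v.2)) ⁻¹' C)
        {C : Set (ZMod k × ℕ) | IsConfigQ n k C}
        {D : Set (ℤ × ℕ) | IsConfigA n D ∧
          (fun v : ℤ × ℕ => (v.1 - (k : ℤ), v.2)) '' D = D} :=
  config_quotient_ZA_general n k hn
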